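/- Every tournament on 5 vertices is (2,3)-cordial. -/
import Mathlib


/-- A `(0,1)`-vertex labelling is friendly if the numbers of vertices labelled `0`
and labelled `1` differ by at most one. -/
def Friendly {V : Type*} (f : V → Fin 2) : Prop :=
  |(Nat.card {v : V // f v = 0} : ℤ) - (Nat.card {v : V // f v = 1} : ℤ)| ≤ 1

/-- The number of arcs of the digraph `D` whose induced label `f(head) - f(tail)`
equals `x`. -/
noncomputable def arcCount {V : Type*} (D : V → V → Prop) (f : V → Fin 2) (x : ℤ) : ℕ :=
  Nat.card {p : V × V // D p.1 p.2 ∧ ((f p.2).val : ℤ) - ((f p.1).val : ℤ) = x}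

/-- A digraph is `(2,3)`-cordial if some friendly vertex labelling induces an arc
labelling in which the numbers of arcs labelled `1`, `-1`, `0` pairwise differ by
at most one. -/
def Cordial23 {V : Type*} (D : V → V → Prop) : Prop :=
  ∃ f : V → Fin 2, Friendly f ∧
    |(arcCount D f 1 : ℤ) - (arcCount D f (-1) : ℤ)| ≤ 1 ∧
    |(arcCount D f 1 : ℤ) - (arcCount D f 0 : ℤ)| ≤ 1 ∧
    |(arcCount D f (-1) : ℤ) - (arcCount D f 0 : ℤ)| ≤ 1

/-- A tournament: a loopless digraph with exactly one arc between every pair of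
distinct vertices. -/
def IsTournament {V : Type*} (D : V → V → Prop) : Prop :=
  (∀ v : V, ¬ D v v) ∧ ∀ u v : V, u ≠ v → (D u v ↔ ¬ D v u)

/-- A (simple) digraph: loopless, with at most one arc between any two distinct
vertices (an orientation of a simple graph). -/
def IsDigraph {V : Type*} (D : V → V → Prop) : Prop :=
  (∀ v : V, ¬ D v v) ∧ ∀ u v : V, D u v → ¬ D v u

namespace FiveTournamentAux

def pr : Fin 10 → Fin 5 × Fin 5
  | 0 => (0,1) | 1 => (0,2) | 2 => (0,3) | 3 => (0,4)
  | 4 => (1,2) | 5 => (1,3) | 6 => (1,4)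
  | 7 => (2,3) | 8 => (2,4) | 9 => (3,4)

def tri : Fin 5 → Fin 5 → Fin 10
  | 0,1 => 0 | 0,2 => 1 | 0,3 => 2 | 0,4 => 3
  | 1,2 => 4 | 1,3 => 5 | 1,4 => 6
  | 2,3 => 7 | 2,4 => 8
  | 3,4 => 9
  | _,_ => 0

def Dof (o : Fin 10 → Bool) (i j : Fin 5) : Bool :=
  if i < j then o (tri i j) else if j < i then !(o (tri j i)) else false

def cnt (d : Fin 5 → Fin 5 → Bool) (f : Fin 5 → Fin 2) (x : ℤ) : ℕ :=
  (Finset.univ.filter (fun p : Fin 5 × Fin 5 =>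
    d p.1 p.2 = true ∧ ((f p.2).val : ℤ) - ((f p.1).val : ℤ) = x)).card

def Good (d : Fin 5 → Fin 5 → Bool) (f : Fin 5 → Fin 2) : Prop :=
  |((Finset.univ.filter (fun v => f v = 0)).card : ℤ) -
    ((Finset.univ.filter (fun v => f v = 1)).card : ℤ)| ≤ 1 ∧
  |(cnt d f 1 : ℤ) - (cnt d f (-1) : ℤ)| ≤ 1 ∧
  |(cnt d f 1 : ℤ) - (cnt d f 0 : ℤ)| ≤ 1 ∧
  |(cnt d f (-1) : ℤ) - (cnt d f 0 : ℤ)| ≤ 1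

instance (d : Fin 5 → Fin 5 → Bool) (f : Fin 5 → Fin 2) : Decidable (Good d f) := by
  unfold Good; infer_instance

def W : Fin 5 → ℕ := ![72930901876963189224291063198273905167471945560591408799972475785049559825192136973694128682108416989040061472874438336945622945040673239136053905766023260061019238075776177360163103277828282726592364480145308811436429157891722467044148873259511978787979093925259803374648778996742735495177932035158480182246,89980958523554765181995860664763757045755429342133117409918052839805801075847976760493532292844424835215383350593056116451914177821711639028554769851479812773493871298772285793132405128589868878390416206212936598828607601303219882287600506374465366214469012820361695542136371128035977504598553966157565051905,20618225856878389967408118190274098164020594481108204108418653998194923561901074903044403521416938746638269881432809576129698304984176910935649385427975403285993083117435721416791167663919032560416342224226698804926237578565013762939603642893918361046062049339615322298884381032742065647635386276256059308728,176008540715067475860555824052774184938597234610137737919396483141177293283882351163638968863297825257109787575871564568277490347245103175075336971829402656543847091248417682310285827394164417676670817122670193293835966174193212342930695684967278433380282485151625497934302836779896546166873559179470108042591,0]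

def witN (n : ℕ) : Fin 5 → Fin 2 :=
  fun i => if (W i).testBit n then 1 else 0

set_option maxRecDepth 10000 in
set_option maxHeartbeats 8000000 in
theorem key0 : ∀ b0 b1 b2 b3 b4 b5 b6 b7 b8 b9 : Bool,
    Good (Dof ![b0,b1,b2,b3,b4,b5,b6,b7,b8,b9])
      (witN (b0.toNat + 2*b1.toNat + 4*b2.toNat + 8*b3.toNat + 16*b4.toNat +
        32*b5.toNat + 64*b6.toNat + 128*b7.toNat + 256*b8.toNat + 512*b9.toNat)) := by
  decide

theorem key (o : Fin 10 → Bool) : ∃ f : Fin 5 → Fin 2, Good (Dof o) f := by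
  have h : ![o 0, o 1, o 2, o 3, o 4, o 5, o 6, o 7, o 8, o 9] = o := by
    funext k; fin_cases k <;> rfl
  have hg := key0 (o 0) (o 1) (o 2) (o 3) (o 4) (o 5) (o 6) (o 7) (o 8) (o 9)
  rw [h] at hg
  exact ⟨_, hg⟩


lemma prtri : ∀ i j : Fin 5, i < j → pr (tri i j) = (i, j) := by decide

end FiveTournamentAux

open FiveTournamentAux in
/-- Every tournament on 5 vertices is (2,3)-cordial. -/
theorem five_tournament_cordial {V : Type*} [Fintype V] (hV : Fintype.card V = 5)
    (D : V → V → Prop) (hT : IsTournament D) : Cordial23 D := by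
  classical
  let e : V ≃ Fin 5 := Fintype.equivFinOfCardEq hV
  let o : Fin 10 → Bool := fun k => decide (D (e.symm (pr k).1) (e.symm (pr k).2))
  have hD : ∀ i j : Fin 5, Dof o i j = true ↔ D (e.symm i) (e.symm j) := by
    intro i j
    rcases lt_trichotomy i j with h | h | h
    · have h1 : Dof o i j = o (tri i j) := by simp [Dof, h]
      rw [h1]
      show decide (D (e.symm (pr (tri i j)).1) (e.symm (pr (tri i j)).2)) = true ↔ _
      rw [prtri i j h]
      simp
    · subst h
      have h1 : Dof o i i = false := by simp [Dof]
      simp [h1, hT.1 (e.symm i)]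
    · have h1 : Dof o i j = !(o (tri j i)) := by
        simp [Dof, h, not_lt_of_gt h]
      rw [h1]
      have h2 : o (tri j i) = decide (D (e.symm j) (e.symm i)) := by
        show decide (D (e.symm (pr (tri j i)).1) (e.symm (pr (tri j i)).2)) = _
        rw [prtri j i h]
      rw [h2]
      have hne : e.symm i ≠ e.symm j := by
        intro hc
        exact absurd (e.symm.injective hc) (ne_of_gt h)
      rw [hT.2 (e.symm i) (e.symm j) hne]
      simp
  obtain ⟨f0, hf0, hf1, hf2, hf3⟩ := key o
  refine ⟨fun v => f0 (e v), ?_, ?_⟩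
  · -- Friendly
    unfold Friendly
    have c0 : Nat.card {v : V // f0 (e v) = 0} =
        (Finset.univ.filter (fun v : Fin 5 => f0 v = 0)).card := by
      rw [Nat.card_congr (Equiv.subtypeEquiv (p := fun v => f0 (e v) = 0)
          (q := fun i => f0 i = 0) e (fun v => Iff.rfl)),
        Nat.card_eq_fintype_card, Fintype.card_subtype]
    have c1 : Nat.card {v : V // f0 (e v) = 1} =
        (Finset.univ.filter (fun v : Fin 5 => f0 v = 1)).card := by
      rw [Nat.card_congr (Equiv.subtypeEquiv (p := fun v => f0 (e v) = 1)
          (q := fun i => f0 i = 1) e (fun v => Iff.rfl)),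
        Nat.card_eq_fintype_card, Fintype.card_subtype]
    rw [c0, c1]
    exact hf0
  · -- arc counts
    have hac : ∀ x : ℤ, arcCount D (fun v => f0 (e v)) x = cnt (Dof o) f0 x := by
      intro x
      unfold arcCount cnt
      have hequiv : {p : V × V // D p.1 p.2 ∧
            ((f0 (e p.2)).val : ℤ) - ((f0 (e p.1)).val : ℤ) = x} ≃
          {q : Fin 5 × Fin 5 // Dof o q.1 q.2 = true ∧
            ((f0 q.2).val : ℤ) - ((f0 q.1).val : ℤ) = x} := by
        refine Equiv.subtypeEquiv (Equiv.prodCongr e e) (fun p => ?_)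
        have h1 := hD (e p.1) (e p.2)
        simp only [Equiv.symm_apply_apply] at h1
        simp [Equiv.prodCongr, h1]
      rw [Nat.card_congr hequiv, Nat.card_eq_fintype_card, Fintype.card_subtype]
    rw [hac 1, hac (-1), hac 0]
    exact ⟨hf1, hf2, hf3⟩
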